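/- Let I=[a,b]⊂ℝ be a closed nondegenerate interval and φ∈Φ_w(I). If f∈RBV^φ(I) is absolutely continuous on I, then its almost-everywhere derivative f' belongs to L^φ(I) and ‖f'‖_{L^φ(I)} ≤ ‖f‖_{RBV^φ(I)}. -/

import Mathlib

open MeasureTheory Filter Set
open scoped ENNReal

noncomputable section

/-- A partition of the interval `[a, b]` into finitely many nondegenerate closed
subintervals with pairwise disjoint interiors, encoded by its endpoints
`a = x 0 < x 1 < ⋯ < x n = b`. -/
structure IntervalPartition (a b : ℝ) where
  n : ℕ
  npos : 0 < n
  x : ℕ → ℝ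
  left : x 0 = a
  right : x n = b
  strict : ∀ i < n, x i < x (i + 1)

/-- The mesh `|(I_k)|` of a partition: the maximal length of its subintervals. -/
def IntervalPartition.mesh {a b : ℝ} (P : IntervalPartition a b) : ℝ :=
  (Finset.range P.n).sup' (Finset.nonempty_range_iff.mpr P.npos.ne')
    fun k => P.x (k + 1) - P.x k

/-- `φ⁺_A(t) = sup_{x ∈ A} φ(x, t)`. -/
def phiSup {α : Type*} (φ : α → ℝ → ℝ≥0∞) (A : Set α) (t : ℝ) : ℝ≥0∞ :=
  ⨆ x ∈ A, φ x t

/-- `φ⁻_A(t) = inf_{x ∈ A} φ(x, t)`. -/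
def phiInf {α : Type*} (φ : α → ℝ → ℝ≥0∞) (A : Set α) (t : ℝ) : ℝ≥0∞ :=
  ⨅ x ∈ A, φ x t

/-- `Σ_k φ⁺_{I_k}(|Δ_k f| / |I_k|) · |I_k|` associated to a partition of `[a,b]`. -/
def vSum (φ : ℝ → ℝ → ℝ≥0∞) {a b : ℝ} (f : ℝ → ℝ) (P : IntervalPartition a b) : ℝ≥0∞ :=
  ∑ k ∈ Finset.range P.n,
    phiSup φ (Icc (P.x k) (P.x (k + 1)))
        (|f (P.x (k + 1)) - f (P.x k)| / (P.x (k + 1) - P.x k)) *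
      ENNReal.ofReal (P.x (k + 1) - P.x k)

/-- The same sum with `φ⁻` in place of `φ⁺`. -/
def vSumInf (φ : ℝ → ℝ → ℝ≥0∞) {a b : ℝ} (f : ℝ → ℝ) (P : IntervalPartition a b) : ℝ≥0∞ :=
  ∑ k ∈ Finset.range P.n,
    phiInf φ (Icc (P.x k) (P.x (k + 1)))
        (|f (P.x (k + 1)) - f (P.x k)| / (P.x (k + 1) - P.x k)) *
      ENNReal.ofReal (P.x (k + 1) - P.x k)

/-- The Riesz φ-variation `V^φ_I(f)`: supremum over all partitions. -/
def rieszVar (φ : ℝ → ℝ → ℝ≥0∞) (a b : ℝ) (f : ℝ → ℝ) : ℝ≥0∞ :=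
  ⨆ P : IntervalPartition a b, vSum φ f P

/-- The upper Riesz φ-variation `V̄^φ_I(f) = limsup_{|(I_k)|→0} Σ φ⁺_{I_k}(|Δ_k f|/|I_k|)|I_k|`. -/
def rieszVarUpper (φ : ℝ → ℝ → ℝ≥0∞) (a b : ℝ) (f : ℝ → ℝ) : ℝ≥0∞ :=
  ⨅ (δ : ℝ) (_ : 0 < δ), ⨆ (P : IntervalPartition a b) (_ : P.mesh < δ), vSum φ f P

/-- The lower Riesz φ-variation `V̲^φ_I(f) = limsup_{|(I_k)|→0} Σ φ⁻_{I_k}(|Δ_k f|/|I_k|)|I_k|`. -/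
def rieszVarLower (φ : ℝ → ℝ → ℝ≥0∞) (a b : ℝ) (f : ℝ → ℝ) : ℝ≥0∞ :=
  ⨅ (δ : ℝ) (_ : 0 < δ), ⨆ (P : IntervalPartition a b) (_ : P.mesh < δ), vSumInf φ f P

/-- Riesz φ-variation for `φ` independent of `x`. -/
def vSumC (φ : ℝ → ℝ≥0∞) {a b : ℝ} (f : ℝ → ℝ) (P : IntervalPartition a b) : ℝ≥0∞ :=
  ∑ k ∈ Finset.range P.n,
    φ (|f (P.x (k + 1)) - f (P.x k)| / (P.x (k + 1) - P.x k)) *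
      ENNReal.ofReal (P.x (k + 1) - P.x k)

def rieszVarC (φ : ℝ → ℝ≥0∞) (a b : ℝ) (f : ℝ → ℝ) : ℝ≥0∞ :=
  ⨆ P : IntervalPartition a b, vSumC φ f P

def rieszVarUpperC (φ : ℝ → ℝ≥0∞) (a b : ℝ) (f : ℝ → ℝ) : ℝ≥0∞ :=
  ⨅ (δ : ℝ) (_ : 0 < δ), ⨆ (P : IntervalPartition a b) (_ : P.mesh < δ), vSumC φ f P

/-- A weak Φ-function on `I` (`φ ∈ Φ_w(I)`). -/
structure IsPhiW {α : Type*} [MeasurableSpace α] (φ : α → ℝ → ℝ≥0∞) (I : Set α) : Prop where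
  meas : ∀ f : α → ℝ, Measurable f → Measurable fun x => φ x |f x|
  mono : ∀ x ∈ I, MonotoneOn (φ x) (Ici 0)
  map_zero : ∀ x ∈ I, φ x 0 = 0
  tendsto_zero : ∀ x ∈ I, Tendsto (φ x) (nhdsWithin 0 (Ioi 0)) (nhds 0)
  tendsto_top : ∀ x ∈ I, Tendsto (φ x) atTop (nhds ⊤)
  aInc1 : ∃ L : ℝ, 1 ≤ L ∧ ∀ x ∈ I, ∀ s t : ℝ, 0 < s → s ≤ t →
    φ x s / ENNReal.ofReal s ≤ ENNReal.ofReal L * (φ x t / ENNReal.ofReal t)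

/-- A convex Φ-function on `I` (`φ ∈ Φ_c(I)`): weak, convex and left-continuous in `t`. -/
structure IsPhiCx {α : Type*} [MeasurableSpace α] (φ : α → ℝ → ℝ≥0∞) (I : Set α) : Prop where
  toIsPhiW : IsPhiW φ I
  convex : ∀ x ∈ I, ∀ s t θ : ℝ, 0 ≤ s → 0 ≤ t → 0 ≤ θ → θ ≤ 1 →
    φ x (θ * s + (1 - θ) * t) ≤ ENNReal.ofReal θ * φ x s + ENNReal.ofReal (1 - θ) * φ x t
  leftCont : ∀ x ∈ I, ∀ t : ℝ, 0 < t → Tendsto (φ x) (nhdsWithin t (Iio t)) (nhds (φ x t))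

/-- An `x`-independent convex Φ-function (`φ ∈ Φ_c`). -/
structure IsPhiC (φ : ℝ → ℝ≥0∞) : Prop where
  mono : MonotoneOn φ (Ici 0)
  map_zero : φ 0 = 0
  tendsto_zero : Tendsto φ (nhdsWithin 0 (Ioi 0)) (nhds 0)
  tendsto_top : Tendsto φ atTop (nhds ⊤)
  convex : ∀ s t θ : ℝ, 0 ≤ s → 0 ≤ t → 0 ≤ θ → θ ≤ 1 →
    φ (θ * s + (1 - θ) * t) ≤ ENNReal.ofReal θ * φ s + ENNReal.ofReal (1 - θ) * φ t
  leftCont : ∀ t : ℝ, 0 < t → Tendsto φ (nhdsWithin t (Iio t)) (nhds (φ t))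

/-- `(aInc)_1` with a given constant `L`. -/
def AInc1Const (φ : ℝ → ℝ → ℝ≥0∞) (I : Set ℝ) (L : ℝ) : Prop :=
  1 ≤ L ∧ ∀ x ∈ I, ∀ s t : ℝ, 0 < s → s ≤ t →
    φ x s / ENNReal.ofReal s ≤ ENNReal.ofReal L * (φ x t / ENNReal.ofReal t)

/-- `(aInc)_p`: `t ↦ φ(x,t)/t^p` is almost increasing, uniformly in `x ∈ I`. -/
def AIncP (φ : ℝ → ℝ → ℝ≥0∞) (I : Set ℝ) (p : ℝ) : Prop :=
  ∃ Lp : ℝ, 1 ≤ Lp ∧ ∀ x ∈ I, ∀ s t : ℝ, 0 < s → s ≤ t →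
    φ x s / ENNReal.ofReal (s ^ p) ≤ ENNReal.ofReal Lp * (φ x t / ENNReal.ofReal (t ^ p))

/-- `(aDec)_q`: `t ↦ φ(x,t)/t^q` is almost decreasing, uniformly in `x ∈ I`. -/
def ADecQ (φ : ℝ → ℝ → ℝ≥0∞) (I : Set ℝ) (q : ℝ) : Prop :=
  ∃ Lq : ℝ, 1 ≤ Lq ∧ ∀ x ∈ I, ∀ s t : ℝ, 0 < s → s ≤ t →
    φ x t / ENNReal.ofReal (t ^ q) ≤ ENNReal.ofReal Lq * (φ x s / ENNReal.ofReal (s ^ q))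

/-- `(A0)`. -/
def A0 (φ : ℝ → ℝ → ℝ≥0∞) (I : Set ℝ) : Prop :=
  ∃ β : ℝ, 0 < β ∧ β ≤ 1 ∧ ∀ x ∈ I, φ x β ≤ 1 ∧ 1 ≤ φ x (1 / β)

/-- `(A1)`; in dimension one a ball of radius `r` has measure `2r`. -/
def A1 (φ : ℝ → ℝ → ℝ≥0∞) (I : Set ℝ) : Prop :=
  ∀ K : ℝ, 0 < K → ∃ β : ℝ, 0 < β ∧ β ≤ 1 ∧
    ∀ z r : ℝ, 0 < r → ∀ x ∈ Metric.ball z r ∩ I, ∀ y ∈ Metric.ball z r ∩ I,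
      ∀ t : ℝ, 0 ≤ t → φ y t ≤ ENNReal.ofReal (K / (2 * r)) →
        φ x (β * t) ≤ φ y t + 1

/-- A modulus of continuity: nonnegative with `ω(r) → 0` as `r → 0⁺`. -/
def IsModulus (ω : ℝ → ℝ) : Prop :=
  (∀ r, 0 ≤ ω r) ∧ Tendsto ω (nhdsWithin 0 (Ioi 0)) (nhds 0)

/-- `(VA1)`; in dimension one a ball of radius `r` has measure `2r`. -/
def VA1 (φ : ℝ → ℝ → ℝ≥0∞) (I : Set ℝ) : Prop :=
  ∀ K : ℝ, 0 < K → ∃ ω : ℝ → ℝ, IsModulus ω ∧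
    ∀ z r : ℝ, 0 < r → ∀ x ∈ Metric.ball z r ∩ I, ∀ y ∈ Metric.ball z r ∩ I,
      ∀ t : ℝ, 0 ≤ t → φ y t ≤ ENNReal.ofReal (K / (2 * r)) →
        φ x (t / (1 + ω r)) ≤ φ y t + ENNReal.ofReal (ω r)

/-- `φ'_∞(x) = lim_{t→∞} φ(x,t)/t`, realized as a supremum since the ratio is nondecreasing
for convex `φ` with `φ(x,0) = 0`. -/
def phiInfty {α : Type*} (φ : α → ℝ → ℝ≥0∞) (x : α) : ℝ≥0∞ :=
  ⨆ (t : ℝ) (_ : 0 < t), φ x t / ENNReal.ofReal t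

/-- Membership in `RBV^φ([a,b])`: `V^φ(λ f) → 0` as `λ → 0⁺`. -/
def MemRBV (φ : ℝ → ℝ → ℝ≥0∞) (a b : ℝ) (f : ℝ → ℝ) : Prop :=
  Tendsto (fun lam : ℝ => rieszVar φ a b fun x => lam * f x) (nhdsWithin 0 (Ioi 0)) (nhds 0)

/-- The Luxemburg quasi-seminorm `‖f‖_{RBV^φ([a,b])}`. -/
def rbvNorm (φ : ℝ → ℝ → ℝ≥0∞) (a b : ℝ) (f : ℝ → ℝ) : ℝ :=
  sInf {lam : ℝ | 0 < lam ∧ rieszVar φ a b (fun x => f x / lam) ≤ 1}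

/-- The Luxemburg quasi-seminorm associated to the upper Riesz variation. -/
def rbvNormUpper (φ : ℝ → ℝ → ℝ≥0∞) (a b : ℝ) (f : ℝ → ℝ) : ℝ :=
  sInf {lam : ℝ | 0 < lam ∧ rieszVarUpper φ a b (fun x => f x / lam) ≤ 1}

/-- Membership in the generalized Orlicz space `L^φ([a,b])`. -/
def MemLphi (φ : ℝ → ℝ → ℝ≥0∞) (a b : ℝ) (g : ℝ → ℝ) : Prop :=
  Measurable g ∧
    Tendsto (fun lam : ℝ => ∫⁻ x in Icc a b, φ x (lam * |g x|))
      (nhdsWithin 0 (Ioi 0)) (nhds 0)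

/-- The Luxemburg quasi-norm on `L^φ([a,b])`. -/
def lphiNorm (φ : ℝ → ℝ → ℝ≥0∞) (a b : ℝ) (g : ℝ → ℝ) : ℝ :=
  sInf {lam : ℝ | 0 < lam ∧ (∫⁻ x in Icc a b, φ x (|g x| / lam)) ≤ 1}

/-- Absolute continuity of `f` on `[a, b]`. -/
def AbsContOn (f : ℝ → ℝ) (a b : ℝ) : Prop :=
  ∀ ε : ℝ, 0 < ε → ∃ δ : ℝ, 0 < δ ∧ ∀ (m : ℕ) (s t : ℕ → ℝ),
    (∀ i < m, a ≤ s i ∧ s i ≤ t i ∧ t i ≤ b) →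
    (∀ i j, i < j → j < m → t i ≤ s j ∨ t j ≤ s i) →
    (∑ i ∈ Finset.range m, (t i - s i)) < δ →
    (∑ i ∈ Finset.range m, |f (t i) - f (s i)|) < ε

/-- Left-continuity of `f` at every point of `(a, b]`. -/
def LeftContOn (f : ℝ → ℝ) (a b : ℝ) : Prop :=
  ∀ x ∈ Ioc a b, Tendsto f (nhdsWithin x (Iio x)) (nhds (f x))

/-- `μ` is the distributional derivative measure of the left-continuous function `f` of
bounded variation on `[a,b]`: `f(x) = f(a) + Df([a, x))`. -/
def IsDerivMeasure (f : ℝ → ℝ) (a b : ℝ) (μ : SignedMeasure ℝ) : Prop :=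
  ∀ x ∈ Icc a b, f x = f a + μ (Ico a x)

end

section Aux

/-- Straddle lemma: difference quotients over shrinking intervals containing `x`
converge to the derivative. -/
lemma straddle_lemma {F : ℝ → ℝ} {x d : ℝ} (hF : HasDerivAt F d x) {u v : ℕ → ℝ}
    (hu : ∀ n, u n ≤ x) (hv : ∀ n, x ≤ v n) (huv : ∀ n, u n < v n)
    (hlen : Tendsto (fun n => v n - u n) atTop (nhds 0)) :
    Tendsto (fun n => (F (v n) - F (u n)) / (v n - u n)) atTop (nhds d) := by
  rw [Metric.tendsto_atTop]
  intro ε hε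
  have h3 : (0:ℝ) < ε / 3 := by linarith
  have hlo := (hasDerivAt_iff_isLittleO.mp hF).def h3
  rw [Metric.eventually_nhds_iff] at hlo
  obtain ⟨δ, hδ, hball⟩ := hlo
  obtain ⟨N, hN⟩ := (Metric.tendsto_atTop.mp hlen) δ hδ
  refine ⟨N, fun n hn => ?_⟩
  have hL : 0 < v n - u n := sub_pos.mpr (huv n)
  have h1 : v n - u n < δ := by
    have := hN n hn; rw [Real.dist_eq, sub_zero] at this
    exact lt_of_le_of_lt (le_abs_self _) this
  have hun : dist (u n) x < δ := by
    rw [Real.dist_eq, abs_of_nonpos (by linarith [hu n])]; linarith [hv n]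
  have hvn : dist (v n) x < δ := by
    rw [Real.dist_eq, abs_of_nonneg (by linarith [hv n])]; linarith [hu n]
  have hbu := hball hun
  have hbv := hball hvn
  rw [Real.norm_eq_abs, Real.norm_eq_abs, smul_eq_mul] at hbu hbv
  have h2u : |u n - x| = x - u n := by
    rw [abs_of_nonpos (by linarith [hu n])]; ring
  have h2v : |v n - x| = v n - x := abs_of_nonneg (by linarith [hv n])
  rw [h2u] at hbu
  rw [h2v] at hbv
  have key : |(F (v n) - F (u n)) - (v n - u n) * d| ≤ ε/3 * (v n - u n) := by
    have e1 : (F (v n) - F (u n)) - (v n - u n) * d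
        = (F (v n) - F x - (v n - x) * d) - (F (u n) - F x - (u n - x) * d) := by ring
    rw [e1]
    calc |(F (v n) - F x - (v n - x) * d) - (F (u n) - F x - (u n - x) * d)|
        ≤ |F (v n) - F x - (v n - x) * d| + |F (u n) - F x - (u n - x) * d| := abs_sub _ _
      _ ≤ ε/3 * (v n - x) + ε/3 * (x - u n) := add_le_add hbv hbu
      _ = ε/3 * (v n - u n) := by ring
  rw [Real.dist_eq]
  have e2 : (F (v n) - F (u n)) / (v n - u n) - d
      = ((F (v n) - F (u n)) - (v n - u n) * d) / (v n - u n) := by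
    field_simp
  rw [e2, abs_div, abs_of_pos hL, div_lt_iff₀ hL]
  nlinarith [abs_nonneg ((F (v n) - F (u n)) - (v n - u n) * d)]

lemma absContOn_boundedVariationOn {f : ℝ → ℝ} {a b : ℝ} (hab : a ≤ b)
    (hAC : AbsContOn f a b) : BoundedVariationOn f (Icc a b) := by
  obtain ⟨δ, hδ, hδ'⟩ := hAC 1 one_pos
  have small : ∀ c d : ℝ, a ≤ c → c ≤ d → d ≤ b → d - c < δ →
      eVariationOn f (Icc c d) ≤ 1 := by
    intro c d hac hcd hdb hlen
    rw [eVariationOn]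
    refine iSup_le ?_
    rintro ⟨n, u, hu, us⟩
    have hsum := hδ' n u (fun i => u (i + 1))
      (fun i _ => ⟨hac.trans (us i).1, hu (Nat.le_succ i), (us (i + 1)).2.trans hdb⟩)
      (fun i j hij _ => Or.inl (hu hij))
      (by
        rw [Finset.sum_range_sub (fun i => u i)]
        have h1 := (us n).2
        have h2 := (us 0).1
        linarith)
    have heq : ∀ i ∈ Finset.range n,
        edist (f (u (i + 1))) (f (u i)) = ENNReal.ofReal |f (u (i + 1)) - f (u i)| := by
      intro i _; rw [edist_dist, Real.dist_eq]
    simp only []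
    rw [Finset.sum_congr rfl heq, ← ENNReal.ofReal_sum_of_nonneg (fun i _ => abs_nonneg _)]
    calc ENNReal.ofReal (∑ i ∈ Finset.range n, |f (u (i + 1)) - f (u i)|)
        ≤ ENNReal.ofReal 1 := ENNReal.ofReal_le_ofReal hsum.le
      _ = 1 := ENNReal.ofReal_one
  have step : ∀ m : ℕ, ∀ c d : ℝ, a ≤ c → c ≤ d → d ≤ b → d - c ≤ m * (δ / 2) →
      eVariationOn f (Icc c d) ≤ m := by
    intro m
    induction m with
    | zero =>
      intro c d hac hcd hdb hlen
      have : c = d := le_antisymm hcd (by push_cast at hlen; linarith)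
      subst this
      rw [Icc_self, eVariationOn.subsingleton f subsingleton_singleton]
      simp
    | succ m ih =>
      intro c d hac hcd hdb hlen
      by_cases hcase : d - c < δ
      · refine (small c d hac hcd hdb hcase).trans ?_
        have : (1 : ℝ≥0∞) ≤ (m : ℝ≥0∞) + 1 := le_add_self
        simpa using this
      · push_neg at hcase
        set e := c + δ / 2 with he
        have hce : c ≤ e := by simp [he]; linarith
        have hed : e ≤ d := by simp [he]; linarith
        have h1 : eVariationOn f (Icc c e) ≤ 1 :=
          small c e hac hce (hed.trans hdb) (by simp [he]; linarith)
        have h2 : eVariationOn f (Icc e d) ≤ m :=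
          ih e d (hac.trans hce) hed hdb (by push_cast at hlen ⊢; simp [he]; linarith)
        have hsplit := eVariationOn.Icc_add_Icc f (s := Icc c d) hce hed ⟨hce, hed⟩
        simp only [Icc_inter_Icc, max_self, min_self, min_eq_right hed,
          max_eq_right hce] at hsplit
        rw [← hsplit]
        calc eVariationOn f (Icc c e) + eVariationOn f (Icc e d)
            ≤ 1 + (m : ℝ≥0∞) := add_le_add h1 h2
          _ = ((m + 1 : ℕ) : ℝ≥0∞) := by push_cast; rw [add_comm]
  obtain ⟨m, hm⟩ := exists_nat_ge ((b - a) / (δ / 2))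
  have : eVariationOn f (Icc a b) ≤ m := by
    refine step m a b le_rfl hab le_rfl ?_
    rw [div_le_iff₀ (by linarith)] at hm
    linarith
  exact ne_top_of_le_ne_top (by simp) this


/-- The step function of difference quotients at scale `h`. -/
noncomputable def stepQ (F : ℝ → ℝ) (a h : ℝ) (x : ℝ) : ℝ :=
  (F (a + (⌊(x - a) / h⌋ + 1) * h) - F (a + ⌊(x - a) / h⌋ * h)) / h

lemma measurable_stepQ (F : ℝ → ℝ) (a h : ℝ) : Measurable (stepQ F a h) := by
  have h1 : Measurable fun x : ℝ => ⌊(x - a) / h⌋ :=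
    ((measurable_id.sub_const a).div_const h).floor
  exact (measurable_from_top
    (f := fun k : ℤ => (F (a + (k + 1) * h) - F (a + k * h)) / h)).comp h1

lemma key_lintegral_le (a b : ℝ) (hab : a < b) (φ : ℝ → ℝ → ℝ≥0∞)
    (hφ : IsPhiW φ (Set.Icc a b)) (f : ℝ → ℝ) (hAC : AbsContOn f a b)
    (θ c : ℝ) (hθ : 0 ≤ θ) (hθc : θ < c) :
    (∫⁻ x in Icc a b, φ x (θ * |deriv f x|)) ≤ rieszVar φ a b (fun y => c * f y) := by
  have hc : 0 < c := lt_of_le_of_lt hθ hθc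
  set F : ℝ → ℝ := fun y => c * f y with hF
  set ms : ℕ → ℝ := fun n => (b - a) / (n + 1) with hms
  have hmspos : ∀ n : ℕ, 0 < ms n := fun n => div_pos (by linarith) (by positivity)
  have hqmeas : ∀ n : ℕ, Measurable fun x => φ x |stepQ F a (ms n) x| :=
    fun n => hφ.meas _ (measurable_stepQ F a (ms n))
  have hdiff := (absContOn_boundedVariationOn hab.le
    hAC).locallyBoundedVariationOn.ae_differentiableWithinAt_of_mem
  have hIoo_ae : ∀ᵐ x ∂(volume.restrict (Icc a b)), x ∈ Ioo a b := by
    rw [ae_iff]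
    have hset : {x : ℝ | ¬ x ∈ Ioo a b} = (Ioo a b)ᶜ := rfl
    rw [hset, Measure.restrict_apply measurableSet_Ioo.compl]
    refine measure_mono_null (t := ({a, b} : Set ℝ)) ?_ ?_
    · rintro x ⟨hx1, hx2⟩
      simp only [mem_compl_iff, mem_Ioo, not_and_or, not_lt] at hx1
      rcases hx1 with h1 | h1
      · exact mem_insert_iff.mpr (Or.inl (le_antisymm h1 hx2.1))
      · exact mem_insert_iff.mpr (Or.inr (mem_singleton_iff.mpr (le_antisymm hx2.2 h1)))
    · exact ((Set.finite_singleton b).insert a).countable.measure_zero _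
  -- pointwise a.e. bound
  have hae : ∀ᵐ x ∂(volume.restrict (Icc a b)),
      φ x (θ * |deriv f x|) ≤ atTop.liminf fun n => φ x |stepQ F a (ms n) x| := by
    filter_upwards [ae_restrict_mem measurableSet_Icc, hIoo_ae, ae_restrict_of_ae hdiff]
      with x hx hxo hxd
    have hdx : DifferentiableAt ℝ f x := (hxd hx).differentiableAt (Icc_mem_nhds hxo.1 hxo.2)
    by_cases hzero : deriv f x = 0
    · simp [hzero, hφ.map_zero x hx]
    · have hd0 : 0 < |deriv f x| := abs_pos.mpr hzero
      have hlen : Tendsto (fun n : ℕ => ms n) atTop (nhds 0) := by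
        have h0 := tendsto_one_div_add_atTop_nhds_zero_nat.const_mul (b - a)
        rw [mul_zero] at h0
        refine h0.congr fun n => ?_
        simp only [hms, mul_one_div]
      set u : ℕ → ℝ := fun n => a + ⌊(x - a) / ms n⌋ * ms n with hu
      set v : ℕ → ℝ := fun n => a + (⌊(x - a) / ms n⌋ + 1) * ms n with hv
      have hvu : ∀ n, v n - u n = ms n := by intro n; simp only [hu, hv]; ring
      have hux : ∀ n, u n ≤ x := by
        intro n
        have h1 := Int.floor_le ((x - a) / ms n)
        have h2 := (le_div_iff₀ (hmspos n)).mp h1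
        simp only [hu]; linarith
      have hxv : ∀ n, x ≤ v n := by
        intro n
        have h1 := Int.lt_floor_add_one ((x - a) / ms n)
        have h2 := (div_lt_iff₀ (hmspos n)).mp h1
        simp only [hv]; nlinarith
      have huv : ∀ n, u n < v n := fun n => by
        have := hmspos n; have := hvu n; linarith
      have hlen' : Tendsto (fun n : ℕ => v n - u n) atTop (nhds 0) :=
        hlen.congr fun n => (hvu n).symm
      have hFd : HasDerivAt F (c * deriv f x) x := (hdx.hasDerivAt).const_mul c
      have hq0 := straddle_lemma hFd hux hxv huv hlen'
      have hq : Tendsto (fun n => stepQ F a (ms n) x) atTop (nhds (c * deriv f x)) := by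
        refine hq0.congr fun n => ?_
        simp only [stepQ, hu, hv]
        rw [show a + (↑⌊(x - a) / ms n⌋ + 1) * ms n - (a + ↑⌊(x - a) / ms n⌋ * ms n)
          = ms n from by ring]
      have habs : Tendsto (fun n => |stepQ F a (ms n) x|) atTop (nhds (c * |deriv f x|)) := by
        have h1 := hq.abs
        rwa [abs_mul, abs_of_pos hc] at h1
      have hlt : θ * |deriv f x| < c * |deriv f x| := by nlinarith
      have hev : ∀ᶠ n in atTop, θ * |deriv f x| ≤ |stepQ F a (ms n) x| := by
        filter_upwards [habs.eventually (lt_mem_nhds hlt)] with n hn using hn.le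
      refine le_liminf_of_le (by isBoundedDefault) (hev.mono fun n hn => ?_)
      exact hφ.mono x hx (mem_Ici.mpr (by positivity)) (mem_Ici.mpr (abs_nonneg _)) hn
  -- integral bound for each n
  have hint : ∀ n : ℕ, (∫⁻ x in Icc a b, φ x |stepQ F a (ms n) x|) ≤ rieszVar φ a b F := by
    intro n
    have hmp := hmspos n
    set P : IntervalPartition a b :=
      { n := n + 1
        npos := Nat.succ_pos n
        x := fun k => a + k * ms n
        left := by simp
        right := by
          simp only [hms]
          push_cast
          field_simp
          ring
        strict := fun i hi => by push_cast; nlinarith } with hP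
    have hsplit : (∫⁻ x in Icc a b, φ x |stepQ F a (ms n) x|)
        = (∫⁻ x in Ico a b, φ x |stepQ F a (ms n) x|)
          + ∫⁻ x in ({b} : Set ℝ), φ x |stepQ F a (ms n) x| := by
      rw [← lintegral_union (measurableSet_singleton b)
        (Set.disjoint_singleton_right.mpr (by simp)), Ico_union_right hab.le]
    rw [hsplit, setLIntegral_measure_zero _ _ (measure_singleton b), add_zero]
    set piece : ℕ → Set ℝ := fun k => Ico (a + k * ms n) (a + (k + 1) * ms n) with hpiece
    have hsub : Ico a b ⊆ ⋃ k : Fin (n + 1), piece k := by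
      intro y hy
      have h0 : (0:ℝ) ≤ (y - a) / ms n := div_nonneg (by linarith [hy.1]) hmp.le
      have hfl0 : 0 ≤ ⌊(y - a) / ms n⌋ := Int.floor_nonneg.mpr h0
      have hNm : ((n:ℝ) + 1) * ms n = b - a := by
        simp only [hms]; field_simp
      have hflN : ⌊(y - a) / ms n⌋ < ((n : ℤ) + 1) := by
        rw [Int.floor_lt, div_lt_iff₀ hmp]
        push_cast
        have := hy.2
        linarith
      set j : ℕ := ⌊(y - a) / ms n⌋.toNat with hj
      have hjc : (j : ℤ) = ⌊(y - a) / ms n⌋ := Int.toNat_of_nonneg hfl0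
      have hjN : j < n + 1 := by
        have : (j : ℤ) < (n : ℤ) + 1 := hjc ▸ hflN
        exact_mod_cast this
      have hjr : (j : ℝ) = (⌊(y - a) / ms n⌋ : ℝ) := by exact_mod_cast hjc
      refine mem_iUnion.mpr ⟨⟨j, hjN⟩, ?_, ?_⟩
      · show a + (j : ℝ) * ms n ≤ y
        have h1 := Int.floor_le ((y - a) / ms n)
        have h2 := (le_div_iff₀ hmp).mp h1
        rw [hjr]; linarith
      · show y < a + ((j : ℝ) + 1) * ms n
        have h1 := Int.lt_floor_add_one ((y - a) / ms n)
        have h2 := (div_lt_iff₀ hmp).mp h1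
        rw [hjr]; linarith
    calc (∫⁻ x in Ico a b, φ x |stepQ F a (ms n) x|)
        ≤ ∫⁻ x in ⋃ k : Fin (n + 1), piece k, φ x |stepQ F a (ms n) x| :=
          lintegral_mono_set hsub
      _ ≤ ∑' k : Fin (n + 1), ∫⁻ x in piece k, φ x |stepQ F a (ms n) x| :=
          lintegral_iUnion_le _ _
      _ = ∑ k ∈ Finset.range (n + 1), ∫⁻ x in piece k, φ x |stepQ F a (ms n) x| := by
          rw [tsum_fintype]
          exact Fin.sum_univ_eq_sum_range (fun k => ∫⁻ x in piece k, φ x |stepQ F a (ms n) x|) _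
      _ ≤ ∑ k ∈ Finset.range (n + 1),
            phiSup φ (Icc (a + k * ms n) (a + (k + 1) * ms n))
              (|F (a + (k + 1) * ms n) - F (a + k * ms n)| / ms n)
              * ENNReal.ofReal (ms n) := by
          refine Finset.sum_le_sum fun k _ => ?_
          refine le_trans (setLIntegral_mono (s := piece k)
            (g := fun _ => phiSup φ (Icc (a + k * ms n) (a + (k + 1) * ms n))
              (|F (a + (k + 1) * ms n) - F (a + k * ms n)| / ms n))
            measurable_const fun y hy => ?_) ?_
          · -- pointwise bound on the piece
            have hy' : a + (k:ℝ) * ms n ≤ y ∧ y < a + ((k:ℝ) + 1) * ms n := by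
              simpa [hpiece, mem_Ico] using hy
            have hfloor : ⌊(y - a) / ms n⌋ = (k : ℤ) := by
              rw [Int.floor_eq_iff]
              refine ⟨?_, ?_⟩
              · push_cast
                rw [le_div_iff₀ hmp]
                linarith [hy'.1]
              · push_cast
                rw [div_lt_iff₀ hmp]
                linarith [hy'.2]
            have hstep : stepQ F a (ms n) y
                = (F (a + ((k:ℝ) + 1) * ms n) - F (a + (k:ℝ) * ms n)) / ms n := by
              simp only [stepQ, hfloor]; push_cast; ring_nf
            have habs : |stepQ F a (ms n) y|
                = |F (a + ((k:ℝ) + 1) * ms n) - F (a + (k:ℝ) * ms n)| / ms n := by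
              rw [hstep, abs_div, abs_of_pos hmp]
            rw [habs]
            have hyIcc : y ∈ Icc (a + (k:ℝ) * ms n) (a + ((k:ℝ) + 1) * ms n) :=
              ⟨hy'.1, hy'.2.le⟩
            exact le_biSup (fun z => φ z (|F (a + ((k:ℝ) + 1) * ms n) - F (a + (k:ℝ) * ms n)| / ms n)) hyIcc
          · rw [setLIntegral_const]
            simp only [hpiece]
            rw [Real.volume_Ico]
            have he : a + ((k:ℝ) + 1) * ms n - (a + (k:ℝ) * ms n) = ms n := by ring
            rw [he]
      _ = vSum φ F P := by
          refine Finset.sum_congr rfl fun k hk => ?_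
          have hx1 : P.x (k + 1) = a + ((k:ℝ) + 1) * ms n := by
            simp only [hP]; push_cast; ring
          have hx0 : P.x k = a + (k:ℝ) * ms n := by simp only [hP]
          rw [hx1, hx0]
          have hd : a + ((k:ℝ) + 1) * ms n - (a + (k:ℝ) * ms n) = ms n := by ring
          rw [hd]
      _ ≤ rieszVar φ a b F := le_iSup (fun Q : IntervalPartition a b => vSum φ F Q) P
  calc (∫⁻ x in Icc a b, φ x (θ * |deriv f x|))
      ≤ ∫⁻ x in Icc a b, atTop.liminf fun n => φ x |stepQ F a (ms n) x| :=
        lintegral_mono_ae hae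
    _ ≤ atTop.liminf fun n => ∫⁻ x in Icc a b, φ x |stepQ F a (ms n) x| :=
        lintegral_liminf_le hqmeas
    _ ≤ atTop.liminf fun _ => rieszVar φ a b F :=
        liminf_le_liminf (Eventually.of_forall hint)
    _ = rieszVar φ a b F := liminf_const _


end Aux

/-- Theorem 6.2.  If `f ∈ RBV^φ(I)` is absolutely continuous, then its a.e. derivative
belongs to `L^φ(I)` and `‖f'‖_{L^φ(I)} ≤ ‖f‖_{RBV^φ(I)}`. -/
theorem lphi_norm_deriv_le_rbv_norm (a b : ℝ) (hab : a < b)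
    (φ : ℝ → ℝ → ℝ≥0∞) (hφ : IsPhiW φ (Set.Icc a b)) :
    ∀ f : ℝ → ℝ, MemRBV φ a b f → AbsContOn f a b →
      MemLphi φ a b (deriv f) ∧ lphiNorm φ a b (deriv f) ≤ rbvNorm φ a b f := by
  intro f hRBV hAC
  have key := fun (θ c : ℝ) (hθ : 0 ≤ θ) (hθc : θ < c) =>
    key_lintegral_le a b hab φ hφ f hAC θ c hθ hθc
  constructor
  · refine ⟨measurable_deriv f, ?_⟩
    have h2 : Tendsto (fun lam : ℝ => 2 * lam) (nhdsWithin 0 (Ioi 0))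
        (nhdsWithin 0 (Ioi 0)) := by
      refine tendsto_nhdsWithin_of_tendsto_nhds_of_eventually_within _ ?_ ?_
      · have h3 := (continuous_const.mul continuous_id :
            Continuous fun lam : ℝ => (2 : ℝ) * lam).tendsto (0 : ℝ)
        have h3 : Tendsto (fun lam : ℝ => (2 : ℝ) * lam) (nhds 0) (nhds 0) := by
          simpa using (tendsto_id (x := nhds (0:ℝ))).const_mul (2:ℝ)
        exact h3.mono_left nhdsWithin_le_nhds
      · filter_upwards [self_mem_nhdsWithin] with lam hlam
        exact mul_pos two_pos (mem_Ioi.mp hlam)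
    have hg : Tendsto (fun lam : ℝ => rieszVar φ a b fun x => (2 * lam) * f x)
        (nhdsWithin 0 (Ioi 0)) (nhds 0) := hRBV.comp h2
    refine tendsto_of_tendsto_of_tendsto_of_le_of_le' tendsto_const_nhds hg ?_ ?_
    · exact Eventually.of_forall fun _ => zero_le
    · filter_upwards [self_mem_nhdsWithin] with lam hlam
      exact key lam (2 * lam) (le_of_lt hlam) (by linarith [mem_Ioi.mp hlam])
  · have hone : ∀ᶠ y : ℝ≥0∞ in nhds 0, y ≤ 1 :=
      eventually_of_mem (Iic_mem_nhds zero_lt_one) fun y hy => hy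
    obtain ⟨lam, hlam1, hlam⟩ := ((hRBV.eventually hone).and self_mem_nhdsWithin).exists
    have hRne : (1 / lam) ∈ {μ : ℝ | 0 < μ ∧ rieszVar φ a b (fun x => f x / μ) ≤ 1} := by
      have hlampos : (0:ℝ) < lam := hlam
      refine ⟨by positivity, ?_⟩
      have hfe : (fun x => f x / (1 / lam)) = fun x => lam * f x := by
        funext x; field_simp
      rw [hfe]; exact hlam1
    simp only [lphiNorm, rbvNorm]
    refine le_csInf ⟨1 / lam, hRne⟩ ?_
    rintro μ ⟨hμ, hμ1⟩
    refine le_of_forall_pos_le_add fun ε hε => ?_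
    have hbdd : BddBelow {lam : ℝ | 0 < lam ∧
        (∫⁻ x in Icc a b, φ x (|deriv f x| / lam)) ≤ 1} := ⟨0, fun y hy => hy.1.le⟩
    refine csInf_le hbdd ⟨by linarith, ?_⟩
    have heq : (∫⁻ x in Icc a b, φ x (|deriv f x| / (μ + ε)))
        = ∫⁻ x in Icc a b, φ x ((1 / (μ + ε)) * |deriv f x|) := by
      refine lintegral_congr fun x => ?_
      rw [one_div, inv_mul_eq_div]
    rw [heq]
    have hkey := key (1 / (μ + ε)) (1 / μ) (by positivity)
      (one_div_lt_one_div_of_lt hμ (by linarith))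
    refine hkey.trans ?_
    have hfe2 : (fun y => (1 / μ) * f y) = fun x => f x / μ := by
      funext x; rw [one_div, inv_mul_eq_div]
    rw [hfe2]
    exact hμ1
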